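/- Let a, b be rational integers with 2 ≤ a ≤ b−2 and additionally b ≤ 2a−3, and let t, v₂, v₃ be integers with 1 ≤ t ≤ b−a, v₂ < 0 and v₃ ≥ 0. Then β(t,v₂,v₃) = t − (b−a+1)v₂ − (b−a+1)b·v₃ + v₂ρ + v₃ρ² is not totally positive. -/

import Mathlib

open IntermediateField Polynomial

noncomputable section

lemma stmt11_arith (A B T V2 V ρ r' r'' : ℝ)
    (hA : 2 ≤ A) (hAB : A + 2 ≤ B) (hBA : B ≤ 2*A - 3)
    (hT1 : 1 ≤ T) (hT2 : T ≤ B - A)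
    (hV2 : V2 ≤ -1) (hVor : V = 0 ∨ 1 ≤ V)
    (hρ : B < ρ)
    (hr'1 : A - 1 < r') (hr'2 : r' < A) (hr''1 : 0 < r'') (hr''2 : r'' < 1)
    (h1 : 0 < T - (B-A+1)*V2 - (B-A+1)*B*V + V2*ρ + V*ρ^2)
    (h2 : 0 < T - (B-A+1)*V2 - (B-A+1)*B*V + V2*r' + V*r'^2)
    (h3 : 0 < T - (B-A+1)*V2 - (B-A+1)*B*V + V2*r'' + V*r''^2) : False := by
  have hA5 : 5 ≤ A := by linarith
  rcases hVor with h0 | hV1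
  · rw [h0] at h1
    nlinarith [mul_nonneg (by linarith : (0:ℝ) ≤ -V2 - 1) (by linarith : (0:ℝ) ≤ ρ - (B-A+1))]
  · have s1 : 0 < r' - (B-A+1) := by linarith
    have s2 : 0 < (B-A+1) - r'' := by linarith
    have k2 : (-V2)*(r' - (B-A+1)) < T + V*(r'^2 - (B-A+1)*B) := by nlinarith [h2]
    have hAx := mul_lt_mul_of_pos_right k2 s2
    have hBx := mul_pos h3 s1
    have hd : 0 < r' - r'' := by linarith
    have p1 : 0 < (A - r')*((B-A+1) - r'') := mul_pos (by linarith) s2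
    have p2 : 0 < (A - (B-A+1))*r'' := mul_pos (by linarith) hr''1
    have hG : (B-A+1)*((B-A+1)-1) < (B-A+1)*B + r'*r'' - (B-A+1)*(r'+r'') := by
      nlinarith [p1, p2]
    have hE : 0 < T*(r'-r'') - V*((r'-r'')*((B-A+1)*B + r'*r'' - (B-A+1)*(r'+r''))) := by
      linarith [hAx, hBx]
    have hbig : 0 < (B-A+1)*B + r'*r'' - (B-A+1)*(r'+r'') := by
      nlinarith [hG, mul_pos (show (0:ℝ) < B-A+1 by linarith) (show (0:ℝ) < B-A+1-1 by linarith)]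
    have hGpos : 0 < (r'-r'')*((B-A+1)*B + r'*r'' - (B-A+1)*(r'+r'')) := mul_pos hd hbig
    have m1 : (r'-r'')*((B-A+1)*((B-A+1)-1)) < (r'-r'')*((B-A+1)*B + r'*r'' - (B-A+1)*(r'+r''))
      := mul_lt_mul_of_pos_left hG hd
    have m2 : (r'-r'')*((B-A+1)*B + r'*r'' - (B-A+1)*(r'+r''))
        ≤ V*((r'-r'')*((B-A+1)*B + r'*r'' - (B-A+1)*(r'+r''))) :=
      le_mul_of_one_le_left hGpos.le hV1
    have m3 : T*(r'-r'') ≤ (B-A)*(r'-r'') := mul_le_mul_of_nonneg_right hT2 hd.le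
    have m4' : (B-A) ≤ (B-A+1)*((B-A+1)-1) := by linarith [mul_self_nonneg (B-A)]
    have m4 : (B-A)*(r'-r'') ≤ ((B-A+1)*((B-A+1)-1))*(r'-r'') :=
      mul_le_mul_of_nonneg_right m4' hd.le
    linarith [hE, m1, m2, m3, m4]


/-- An element of a field `K` is totally positive if its image under every
real embedding of `K` is positive. -/
def TotallyPositive {K : Type*} [Field K] (x : K) : Prop :=
  ∀ φ : K →+* ℝ, 0 < φ x

/-- The element `β(t,v₂,v₃) = t − (b−a+1)v₂ − (b−a+1)b·v₃ + v₂ρ + v₃ρ²` of `ℚ(ρ) ⊆ ℝ`. -/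
def betaT (a b : ℤ) (ρ : ℝ) (t v₂ v₃ : ℤ) : ℚ⟮ρ⟯ :=
  ((t - (b - a + 1) * v₂ - (b - a + 1) * b * v₃ : ℤ) : ℚ⟮ρ⟯)
    + ((v₂ : ℤ) : ℚ⟮ρ⟯) * AdjoinSimple.gen ℚ ρ
    + ((v₃ : ℤ) : ℚ⟮ρ⟯) * AdjoinSimple.gen ℚ ρ ^ 2

set_option maxHeartbeats 1600000 in
/-- Let `2 ≤ a ≤ b−2` with moreover `b ≤ 2a−3`, and `1 ≤ t ≤ b−a`,
`v₂ < 0`, `v₃ ≥ 0`. Then `β(t,v₂,v₃)` is not totally positive. -/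
theorem stmt_11 (a b : ℤ) (ha : 2 ≤ a) (hab : a ≤ b - 2)
    (ρ : ℝ) (hroot : ρ ^ 3 - ((a : ℝ) + (b : ℝ)) * ρ ^ 2 + (a : ℝ) * (b : ℝ) * ρ - 1 = 0)
    (hmax : ∀ x : ℝ, x ^ 3 - ((a : ℝ) + (b : ℝ)) * x ^ 2 + (a : ℝ) * (b : ℝ) * x - 1 = 0 → x ≤ ρ)
    (hdeg : Module.finrank ℚ ℚ⟮ρ⟯ = 3)
    (t v₂ v₃ : ℤ) (ht0 : 1 ≤ t) (ht1 : t ≤ b - a)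
    (hb : b ≤ 2 * a - 3) (hv₂ : v₂ < 0) (hv₃ : 0 ≤ v₃) :
    ¬ TotallyPositive (betaT a b ρ t v₂ v₃) := by
  intro htp
  -- the minimal polynomial
  set p : ℚ[X] := X^3 - C ((a:ℚ)+(b:ℚ)) * X^2 + C ((a:ℚ)*(b:ℚ)) * X - 1 with hp
  have hpmonic : p.Monic := by rw [hp]; monicity!
  have hpdeg : p.natDegree = 3 := by rw [hp]; compute_degree!
  have haev : ∀ y : ℝ, y ^ 3 - ((a : ℝ) + (b : ℝ)) * y ^ 2 + (a : ℝ) * (b : ℝ) * y - 1 = 0 →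
      Polynomial.aeval y p = 0 := by
    intro y hy
    rw [hp]
    simp only [map_sub, map_add, map_mul, map_pow, map_one, aeval_X, aeval_C, eq_ratCast]
    push_cast
    linear_combination hy
  have hint : IsIntegral ℚ ρ := ⟨p, hpmonic, by
    simpa [Polynomial.aeval_def] using haev ρ hroot⟩
  have hmp : minpoly ℚ ρ = p := by
    have hdvd := minpoly.dvd ℚ ρ (haev ρ hroot)
    have hnd : (minpoly ℚ ρ).natDegree = 3 := by
      rw [← IntermediateField.adjoin.finrank hint]; exact hdeg
    obtain ⟨q, hq⟩ := hdvd
    have hqm : q.Monic := (minpoly.monic hint).of_mul_monic_left (hq ▸ hpmonic)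
    have hqd : q.natDegree = 0 := by
      have := (minpoly.monic hint).natDegree_mul hqm
      rw [← hq, hpdeg, hnd] at this
      omega
    have : q = 1 := hqm.natDegree_eq_zero.mp hqd
    rw [hq, this, mul_one]
  set pb := IntermediateField.adjoin.powerBasis hint with hpb
  have hgen : pb.gen = AdjoinSimple.gen ℚ ρ := IntermediateField.adjoin.powerBasis_gen hint
  have hmpg : minpoly ℚ pb.gen = p := by rw [hgen]; exact (IntermediateField.minpoly_gen (F := ℚ) (α := ρ)).trans hmp
  have mk : ∀ y : ℝ, y ^ 3 - ((a : ℝ) + (b : ℝ)) * y ^ 2 + (a : ℝ) * (b : ℝ) * y - 1 = 0 →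
      0 < ((t - (b-a+1)*v₂ - (b-a+1)*b*v₃ : ℤ) : ℝ) + (v₂:ℝ)*y + (v₃:ℝ)*y^2 := by
    intro y hy
    have hy' : Polynomial.aeval y (minpoly ℚ pb.gen) = 0 := by rw [hmpg]; exact haev y hy
    have hgeneval : (pb.lift y hy') (AdjoinSimple.gen ℚ ρ) = y := by
      rw [← hgen]; exact pb.lift_gen y hy'
    have := htp (pb.lift y hy').toRingHom
    simpa [betaT, hgeneval] using this
  -- cast facts
  have hA2 : (2:ℝ) ≤ (a:ℝ) := by exact_mod_cast ha
  have hA5 : (5:ℝ) ≤ (a:ℝ) := by exact_mod_cast (show (5:ℤ) ≤ a by omega)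
  have hABr : (a:ℝ) + 2 ≤ (b:ℝ) := by exact_mod_cast (show a + 2 ≤ b by omega)
  have hBAr : (b:ℝ) ≤ 2*(a:ℝ) - 3 := by
    have := (show ((b:ℝ)) ≤ ((2*a - 3 : ℤ) : ℝ) by exact_mod_cast hb)
    push_cast at this; linarith
  have hT1 : (1:ℝ) ≤ (t:ℝ) := by exact_mod_cast ht0
  have hT2 : (t:ℝ) ≤ (b:ℝ) - (a:ℝ) := by
    have := (show ((t:ℝ)) ≤ ((b - a : ℤ) : ℝ) by exact_mod_cast ht1)
    push_cast at this; linarith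
  have hV2 : (v₂:ℝ) ≤ -1 := by exact_mod_cast (show v₂ ≤ -1 by omega)
  have hVor : (v₃:ℝ) = 0 ∨ 1 ≤ (v₃:ℝ) := by
    rcases (show v₃ = 0 ∨ 1 ≤ v₃ by omega) with h | h
    · left; exact_mod_cast h
    · right; exact_mod_cast h
  -- the cubic as a real function
  set g : ℝ → ℝ := fun x => x ^ 3 - ((a:ℝ) + (b:ℝ)) * x ^ 2 + (a:ℝ) * (b:ℝ) * x - 1 with hg
  have hcont : Continuous g := by rw [hg]; continuity
  -- root r' ∈ (a-1, a)
  obtain ⟨r', hr'mem, hr'root⟩ :=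
    intermediate_value_Ioo' (show (a:ℝ) - 1 ≤ (a:ℝ) by linarith) hcont.continuousOn
      (show (0:ℝ) ∈ Set.Ioo (g (a:ℝ)) (g ((a:ℝ) - 1)) from
        ⟨by simp only [hg]; nlinarith, by simp only [hg]; nlinarith⟩)
  simp only [hg] at hr'root
  -- root r'' ∈ (0, 1)
  obtain ⟨r'', hr''mem, hr''root⟩ :=
    intermediate_value_Ioo (show (0:ℝ) ≤ 1 by norm_num) hcont.continuousOn
      (show (0:ℝ) ∈ Set.Ioo (g 0) (g 1) from
        ⟨by simp only [hg]; nlinarith, by simp only [hg]; nlinarith⟩)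
  simp only [hg] at hr''root
  -- b < ρ
  obtain ⟨rb, hrbmem, hrbroot⟩ :=
    intermediate_value_Ioo (show (b:ℝ) ≤ (b:ℝ) + 1 by linarith) hcont.continuousOn
      (show (0:ℝ) ∈ Set.Ioo (g (b:ℝ)) (g ((b:ℝ) + 1)) from
        ⟨by simp only [hg]; nlinarith, by simp only [hg]; nlinarith⟩)
  simp only [hg] at hrbroot
  have hρB : (b:ℝ) < ρ := lt_of_lt_of_le hrbmem.1 (hmax rb hrbroot)
  -- the three positivity facts
  have H1 := mk ρ hroot
  have H2 := mk r' hr'root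
  have H3 := mk r'' hr''root
  push_cast at H1 H2 H3
  exact stmt11_arith (a:ℝ) (b:ℝ) (t:ℝ) (v₂:ℝ) (v₃:ℝ) ρ r' r'' hA2 hABr hBAr hT1 hT2 hV2 hVor
    hρB hr'mem.1 hr'mem.2 hr''mem.1 hr''mem.2 H1 H2 H3
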